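/- Local a priori error bound for WST-LSPG (Theorem 4.5): retaining the window-residual setup, suppose u ∈ V and u₀ ∈ E satisfy R u u₀ = 0 (the full-order-model trajectory over the window). Let S ⊆ V be the (affine) space–time trial set, let W be a submodule of E, and let ũ ∈ V and ũ₀ ∈ W be the WST-LSPG approximate trajectory and its window initial condition, satisfying the residual-minimization (optimality) property that for every w ∈ S, ‖R ũ ũ₀‖ ≤ ‖R w ũ₀‖. Let û ∈ S be a point of S closest to u in the ℓ² norm, and let û₀ be the orthogonal projection of u₀ onto W. Then ‖ũ - u‖ ≤ (1 / c₁) * ‖R û û₀‖ + (2 * c₂ / c₁) * ‖ũ₀ - u₀‖. -/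

import Mathlib

/-!
The window residual splits into a state part `A w - Δt • B (F w)` and an initial-condition part
`Aic w₀ - Δt • Bic (f₀ w₀)`. The bounds on `A`, `B`, `F` make the state part `c₁`-expanding
(`c₁ ‖w - v‖ ≤ ‖R w w₀ - R v w₀‖`), and those on `Aic`, `Bic`, `f₀` make the initial-condition part
`c₂`-Lipschitz. Since `R u u₀ = 0`,
`c₁ ‖ũ - u‖ ≤ ‖R ũ u₀‖ ≤ ‖R ũ ũ₀‖ + c₂ ‖ũ₀ - u₀‖`, residual minimization replaces `ũ` by `û`,
and moving the initial condition from `ũ₀` to `û₀` costs `c₂ ‖ũ₀ - û₀‖ ≤ c₂ ‖ũ₀ - u₀‖`,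
because the orthogonal projection onto `W` is `1`-Lipschitz and fixes `ũ₀ ∈ W`.
-/

section WindowResidual

variable {V E X Y Z : Type*}
  [NormedAddCommGroup V] [NormedAddCommGroup E] [NormedAddCommGroup X]
  [NormedAddCommGroup Y] [NormedAddCommGroup Z]
  [NormedSpace ℝ X] [NormedSpace ℝ Y] [NormedSpace ℝ Z]

lemma norm_smul_map_comp_sub_le {K : Y →L[ℝ] X} {G : V → Y} {t σ κ : ℝ}
    (ht : 0 ≤ t) (hσ : 0 ≤ σ) (hK : ∀ y, ‖K y‖ ≤ σ * ‖y‖)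
    (hG : ∀ x y, ‖G x - G y‖ ≤ κ * ‖x - y‖) (x y : V) :
    ‖t • K (G x) - t • K (G y)‖ ≤ σ * t * κ * ‖x - y‖ := by
  rw [← smul_sub, ← map_sub, norm_smul, Real.norm_of_nonneg ht]
  calc t * ‖K (G x - G y)‖ ≤ t * (σ * (κ * ‖x - y‖)) := by
        gcongr
        exact (hK _).trans (by gcongr; exact hG x y)
    _ = σ * t * κ * ‖x - y‖ := by ring

variable [NormedSpace ℝ V] [NormedSpace ℝ E]

def windowResidual (A : V →L[ℝ] X) (B : Y →L[ℝ] X) (Aic : E →L[ℝ] X) (Bic : Z →L[ℝ] X)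
    (Δt : ℝ) (F : V → Y) (f₀ : E → Z) (w : V) (w₀ : E) : X :=
  A w - Δt • B (F w) + Aic w₀ - Δt • Bic (f₀ w₀)

variable {A : V →L[ℝ] X} {B : Y →L[ℝ] X} {Aic : E →L[ℝ] X} {Bic : Z →L[ℝ] X}
  {Δt κ : ℝ} {F : V → Y} {f₀ : E → Z}

lemma windowResidual_sub_windowResidual_left (w v : V) (w₀ : E) :
    windowResidual A B Aic Bic Δt F f₀ w w₀ - windowResidual A B Aic Bic Δt F f₀ v w₀ =
      A (w - v) - (Δt • B (F w) - Δt • B (F v)) := by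
  rw [windowResidual, windowResidual, map_sub]
  abel

lemma windowResidual_sub_windowResidual_right (w : V) (a b : E) :
    windowResidual A B Aic Bic Δt F f₀ w a - windowResidual A B Aic Bic Δt F f₀ w b =
      Aic (a - b) - (Δt • Bic (f₀ a) - Δt • Bic (f₀ b)) := by
  rw [windowResidual, windowResidual, map_sub]
  abel

lemma mul_norm_sub_le_norm_windowResidual_sub {σA σB : ℝ} (hΔt : 0 ≤ Δt)
    (hF : ∀ x y, ‖F x - F y‖ ≤ κ * ‖x - y‖)
    (hA : ∀ x, σA * ‖x‖ ≤ ‖A x‖) (hσB : 0 ≤ σB) (hB : ∀ y, ‖B y‖ ≤ σB * ‖y‖)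
    (w v : V) (w₀ : E) :
    (σA - σB * Δt * κ) * ‖w - v‖ ≤
      ‖windowResidual A B Aic Bic Δt F f₀ w w₀ - windowResidual A B Aic Bic Δt F f₀ v w₀‖ := by
  rw [windowResidual_sub_windowResidual_left]
  have hAB := norm_sub_norm_le (A (w - v)) (Δt • B (F w) - Δt • B (F v))
  linarith [hA (w - v), norm_smul_map_comp_sub_le hΔt hσB hB hF w v]

lemma norm_windowResidual_sub_le {σAic σBic : ℝ} (hΔt : 0 ≤ Δt)
    (hf₀ : ∀ x y, ‖f₀ x - f₀ y‖ ≤ κ * ‖x - y‖)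
    (hAic : ∀ x, ‖Aic x‖ ≤ σAic * ‖x‖) (hσBic : 0 ≤ σBic) (hBic : ∀ z, ‖Bic z‖ ≤ σBic * ‖z‖)
    (w : V) (a b : E) :
    ‖windowResidual A B Aic Bic Δt F f₀ w a - windowResidual A B Aic Bic Δt F f₀ w b‖ ≤
      (σAic + Δt * κ * σBic) * ‖a - b‖ := by
  rw [windowResidual_sub_windowResidual_right]
  have hsub := norm_sub_le (Aic (a - b)) (Δt • Bic (f₀ a) - Δt • Bic (f₀ b))
  linarith [hAic (a - b), norm_smul_map_comp_sub_le hΔt hσBic hBic hf₀ a b]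

end WindowResidual

theorem mul_norm_sub_le_of_residual_le {V E X : Type*}
    [NormedAddCommGroup V] [NormedAddCommGroup E] [NormedAddCommGroup X]
    {R : V → E → X} {c₁ c₂ : ℝ} (hc₂ : 0 ≤ c₂)
    (hstab : ∀ w v w₀, c₁ * ‖w - v‖ ≤ ‖R w w₀ - R v w₀‖)
    (hlip : ∀ w a b, ‖R w a - R w b‖ ≤ c₂ * ‖a - b‖)
    {u uR uP : V} {u₀ uR₀ uP₀ : E} (hu : R u u₀ = 0)
    (hopt : ‖R uR uR₀‖ ≤ ‖R uP uR₀‖) (hproj : ‖uR₀ - uP₀‖ ≤ ‖uR₀ - u₀‖) :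
    c₁ * ‖uR - u‖ ≤ ‖R uP uP₀‖ + 2 * c₂ * ‖uR₀ - u₀‖ := by
  have hstab_u : c₁ * ‖uR - u‖ ≤ ‖R uR u₀‖ := by simpa [hu] using hstab uR u u₀
  have hshift_u₀ : ‖R uR u₀‖ ≤ ‖R uR uR₀‖ + c₂ * ‖uR₀ - u₀‖ := by
    have := norm_sub_norm_le (R uR u₀) (R uR uR₀)
    rw [norm_sub_rev] at this
    linarith [hlip uR uR₀ u₀]
  have hshift_uP₀ : ‖R uP uR₀‖ ≤ ‖R uP uP₀‖ + c₂ * ‖uR₀ - uP₀‖ := by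
    have := norm_sub_norm_le (R uP uR₀) (R uP uP₀)
    linarith [hlip uP uR₀ uP₀]
  linarith [mul_le_mul_of_nonneg_left hproj hc₂]

lemma Submodule.norm_sub_starProjection_le_of_mem {𝕜 E : Type*} [RCLike 𝕜]
    [NormedAddCommGroup E] [InnerProductSpace 𝕜 E] {K : Submodule 𝕜 E}
    [K.HasOrthogonalProjection] {v : E} (hv : v ∈ K) (u : E) :
    ‖v - K.starProjection u‖ ≤ ‖v - u‖ := by
  simpa [← dist_eq_norm, K.starProjection_eq_self_iff.mpr hv] using
    K.lipschitzWith_starProjection.dist_le_mul v u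

theorem local_a_priori_error_bound_general
    (M N : ℕ)
    (A B : EuclideanSpace ℝ (Fin M) →L[ℝ] EuclideanSpace ℝ (Fin M))
    (Aic Bic : EuclideanSpace ℝ (Fin N) →L[ℝ] EuclideanSpace ℝ (Fin M))
    (Δt : ℝ) (hΔt : 0 < Δt)
    (F : EuclideanSpace ℝ (Fin M) → EuclideanSpace ℝ (Fin M))
    (f₀ : EuclideanSpace ℝ (Fin N) → EuclideanSpace ℝ (Fin N))
    (κ : ℝ) (hκ : 0 ≤ κ)
    (hF : ∀ x y, ‖F x - F y‖ ≤ κ * ‖x - y‖)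
    (hf₀ : ∀ x y, ‖f₀ x - f₀ y‖ ≤ κ * ‖x - y‖)
    (σA σB σAic σBic : ℝ)
    (hA : ∀ x, σA * ‖x‖ ≤ ‖A x‖)
    (hσB : 0 ≤ σB) (hB : ∀ x, ‖B x‖ ≤ σB * ‖x‖)
    (hσAic : 0 ≤ σAic) (hAic : ∀ x, ‖Aic x‖ ≤ σAic * ‖x‖)
    (hσBic : 0 ≤ σBic) (hBic : ∀ x, ‖Bic x‖ ≤ σBic * ‖x‖)
    (R : EuclideanSpace ℝ (Fin M) → EuclideanSpace ℝ (Fin N) → EuclideanSpace ℝ (Fin M))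
    (hR : ∀ w w₀, R w w₀ = A w - Δt • B (F w) + Aic w₀ - Δt • Bic (f₀ w₀))
    (c₁ c₂ : ℝ)
    (hc₁ : c₁ = σA - σB * Δt * κ) (hc₂ : c₂ = σAic + Δt * κ * σBic)
    (hc₁pos : 0 < c₁)
    (u : EuclideanSpace ℝ (Fin M)) (u₀ : EuclideanSpace ℝ (Fin N))
    (hFOM : R u u₀ = 0)
    (S : Set (EuclideanSpace ℝ (Fin M))) (W : Submodule ℝ (EuclideanSpace ℝ (Fin N)))
    (uR : EuclideanSpace ℝ (Fin M)) (uR₀ : EuclideanSpace ℝ (Fin N)) (huR₀ : uR₀ ∈ W)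
    (hopt : ∀ w ∈ S, ‖R uR uR₀‖ ≤ ‖R w uR₀‖)
    (uP : EuclideanSpace ℝ (Fin M)) (huPS : uP ∈ S)
    (uP₀ : EuclideanSpace ℝ (Fin N)) (huP₀ : uP₀ = (W.orthogonalProjection u₀ : EuclideanSpace ℝ (Fin N))) :
    ‖uR - u‖ ≤ (1 / c₁) * ‖R uP uP₀‖ + (2 * c₂ / c₁) * ‖uR₀ - u₀‖ := by
  have hR' : R = windowResidual A B Aic Bic Δt F f₀ := funext₂ hR
  have hstab : ∀ w v w₀, c₁ * ‖w - v‖ ≤ ‖R w w₀ - R v w₀‖ := by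
    rw [hR', hc₁]
    exact mul_norm_sub_le_norm_windowResidual_sub hΔt.le hF hA hσB hB
  have hlip : ∀ w a b, ‖R w a - R w b‖ ≤ c₂ * ‖a - b‖ := by
    rw [hR', hc₂]
    exact norm_windowResidual_sub_le hΔt.le hf₀ hAic hσBic hBic
  have hproj : ‖uR₀ - uP₀‖ ≤ ‖uR₀ - u₀‖ := huP₀ ▸
    W.norm_sub_starProjection_le_of_mem huR₀ u₀
  have hbound := mul_norm_sub_le_of_residual_le (by rw [hc₂]; positivity) hstab hlip hFOM
    (hopt uP huPS) hproj
  rw [div_mul_eq_mul_div, div_mul_eq_mul_div, ← add_div, le_div_iff₀ hc₁pos]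
  linarith

/-- Local a priori error bound for WST-LSPG (Theorem 4.5). -/
theorem local_a_priori_error_bound
    (M N : ℕ)
    (A B : EuclideanSpace ℝ (Fin M) →L[ℝ] EuclideanSpace ℝ (Fin M))
    (Aic Bic : EuclideanSpace ℝ (Fin N) →L[ℝ] EuclideanSpace ℝ (Fin M))
    (Δt : ℝ) (hΔt : 0 < Δt)
    (F : EuclideanSpace ℝ (Fin M) → EuclideanSpace ℝ (Fin M))
    (f₀ : EuclideanSpace ℝ (Fin N) → EuclideanSpace ℝ (Fin N))
    (κ : ℝ) (hκ : 0 ≤ κ)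
    (hF : ∀ x y, ‖F x - F y‖ ≤ κ * ‖x - y‖)
    (hf₀ : ∀ x y, ‖f₀ x - f₀ y‖ ≤ κ * ‖x - y‖)
    (σA σB σAic σBic : ℝ)
    (hσA : 0 < σA) (hA : ∀ x, σA * ‖x‖ ≤ ‖A x‖)
    (hσB : 0 ≤ σB) (hB : ∀ x, ‖B x‖ ≤ σB * ‖x‖)
    (hσAic : 0 ≤ σAic) (hAic : ∀ x, ‖Aic x‖ ≤ σAic * ‖x‖)
    (hσBic : 0 ≤ σBic) (hBic : ∀ x, ‖Bic x‖ ≤ σBic * ‖x‖)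
    (R : EuclideanSpace ℝ (Fin M) → EuclideanSpace ℝ (Fin N) → EuclideanSpace ℝ (Fin M))
    (hR : ∀ w w₀, R w w₀ = A w - Δt • B (F w) + Aic w₀ - Δt • Bic (f₀ w₀))
    (c₁ c₂ : ℝ)
    (hc₁ : c₁ = σA - σB * Δt * κ) (hc₂ : c₂ = σAic + Δt * κ * σBic)
    (hc₁pos : 0 < c₁)
    (u : EuclideanSpace ℝ (Fin M)) (u₀ : EuclideanSpace ℝ (Fin N))
    (hFOM : R u u₀ = 0)
    (S : Set (EuclideanSpace ℝ (Fin M))) (W : Submodule ℝ (EuclideanSpace ℝ (Fin N)))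
    (uR : EuclideanSpace ℝ (Fin M)) (uR₀ : EuclideanSpace ℝ (Fin N)) (huR₀ : uR₀ ∈ W)
    (hopt : ∀ w ∈ S, ‖R uR uR₀‖ ≤ ‖R w uR₀‖)
    (uP : EuclideanSpace ℝ (Fin M)) (huPS : uP ∈ S)
    (huPclosest : ∀ w ∈ S, ‖u - uP‖ ≤ ‖u - w‖)
    (uP₀ : EuclideanSpace ℝ (Fin N)) (huP₀ : uP₀ = (W.orthogonalProjection u₀ : EuclideanSpace ℝ (Fin N))) :
    ‖uR - u‖ ≤ (1 / c₁) * ‖R uP uP₀‖ + (2 * c₂ / c₁) * ‖uR₀ - u₀‖ :=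
  local_a_priori_error_bound_general M N A B Aic Bic Δt hΔt F f₀ κ hκ hF hf₀ σA σB σAic σBic hA hσB
    hB hσAic hAic hσBic hBic R hR c₁ c₂ hc₁ hc₂ hc₁pos u u₀ hFOM S W uR uR₀ huR₀ hopt uP huPS uP₀
    huP₀
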